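/- Let Φ₁, Φ₂ be continuously differentiable real-valued functions and v, J, J̃ continuously differentiable vector fields of space (in ℝ³) and time on an open set, and let ρ₁, ρ₂ be nonzero constants. Suppose ∂Φ₁/∂t + ∇·(Φ₁ v) = −(1/ρ₁)∇·J, ∂Φ₂/∂t + ∇·(Φ₂ v) = −(1/ρ₂)∇·J̃, Φ₁ + Φ₂ = 1, and the mixture density ρ = ρ₁Φ₁ + ρ₂Φ₂ satisfies ∂ρ/∂t + ∇·(ρ v) = 0 pointwise. Then ∇·(J + J̃) = 0 and ∇·v = ((ρ₁ − ρ₂)/(ρ₁ρ₂)) ∇·J pointwise. -/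

import Mathlib

/-!
Multiplying the volume balances by `ρ₁`, `ρ₂` and subtracting the mass balance leaves
`∇·J + ∇·J̃ = 0`. Adding the volume balances with their own weights and using
`Φ₁ + Φ₂ = 1`, which kills `∂ₜ(Φ₁ + Φ₂)` and turns `∇·(Φ₁ v) + ∇·(Φ₂ v)` into `∇·v`, gives
`∇·v = -(1/ρ₁) ∇·J - (1/ρ₂) ∇·J̃`, and eliminating `∇·J̃` yields the formula for `∇·v`.
-/

noncomputable section
open scoped BigOperators

/-- `i`-th spatial partial derivative of a scalar field on `ℝ³`. -/
def pd3 (i : Fin 3) (f : (Fin 3 → ℝ) → ℝ) (x : Fin 3 → ℝ) : ℝ :=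
  fderiv ℝ f x (Pi.single i 1)

/-- Divergence of a vector field on `ℝ³`. -/
def div3 (u : (Fin 3 → ℝ) → Fin 3 → ℝ) (x : Fin 3 → ℝ) : ℝ :=
  ∑ i, pd3 i (fun y => u y i) x

open Filter Topology

section Slices

variable {X Y : Type*} [TopologicalSpace X] [TopologicalSpace Y] {U : Set (X × Y)} {q : X × Y}

lemma eventually_prodMk_right_mem (hU : U ∈ 𝓝 q) : ∀ᶠ y in 𝓝 q.2, (q.1, y) ∈ U :=
  (Continuous.prodMk_right q.1).continuousAt.preimage_mem_nhds hU

lemma eventually_prodMk_left_mem (hU : U ∈ 𝓝 q) : ∀ᶠ s in 𝓝 q.1, (s, q.2) ∈ U :=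
  (Continuous.prodMk_left q.2).continuousAt.preimage_mem_nhds hU

end Slices

section DifferentiableSlices

variable {𝕜 E F G : Type*} [NontriviallyNormedField 𝕜] [NormedAddCommGroup E] [NormedSpace 𝕜 E]
  [NormedAddCommGroup F] [NormedSpace 𝕜 F] [NormedAddCommGroup G] [NormedSpace 𝕜 G]
  {φ : E × F → G} {q : E × F}

lemma DifferentiableAt.comp_prodMk_right (hφ : DifferentiableAt 𝕜 φ q) :
    DifferentiableAt 𝕜 (fun y => φ (q.1, y)) q.2 :=
  hφ.comp q.2 ((differentiableAt_const _).prodMk differentiableAt_id)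

lemma DifferentiableAt.comp_prodMk_left (hφ : DifferentiableAt 𝕜 φ q) :
    DifferentiableAt 𝕜 (fun s => φ (s, q.2)) q.1 :=
  hφ.comp q.1 (differentiableAt_id.prodMk (differentiableAt_const _))

end DifferentiableSlices

section Divergence

variable {f g : (Fin 3 → ℝ) → ℝ} {u w : (Fin 3 → ℝ) → Fin 3 → ℝ} {x : Fin 3 → ℝ}

lemma pd3_add (i : Fin 3) (hf : DifferentiableAt ℝ f x) (hg : DifferentiableAt ℝ g x) :
    pd3 i (fun y => f y + g y) x = pd3 i f x + pd3 i g x := by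
  simp [pd3, fderiv_fun_add hf hg]

lemma pd3_const_mul (i : Fin 3) (c : ℝ) (hf : DifferentiableAt ℝ f x) :
    pd3 i (fun y => c * f y) x = c * pd3 i f x := by
  simp [pd3, fderiv_const_mul hf c]

lemma div3_congr (h : u =ᶠ[𝓝 x] w) : div3 u x = div3 w x := by
  refine Finset.sum_congr rfl fun i _ => ?_
  have hi : (fun y => u y i) =ᶠ[𝓝 x] fun y => w y i := h.mono fun y hy => congrFun hy i
  rw [pd3, pd3, hi.fderiv_eq]

lemma div3_add (hu : ∀ i, DifferentiableAt ℝ (fun y => u y i) x)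
    (hw : ∀ i, DifferentiableAt ℝ (fun y => w y i) x) :
    div3 (fun y => u y + w y) x = div3 u x + div3 w x := by
  simp only [div3, Pi.add_apply, pd3_add _ (hu _) (hw _), Finset.sum_add_distrib]

lemma div3_const_smul (c : ℝ) (hu : ∀ i, DifferentiableAt ℝ (fun y => u y i) x) :
    div3 (fun y => c • u y) x = c * div3 u x := by
  simp only [div3, Pi.smul_apply, smul_eq_mul, pd3_const_mul _ c (hu _), Finset.mul_sum]

lemma DifferentiableAt.smul_component (hf : DifferentiableAt ℝ f x)
    (hu : ∀ i, DifferentiableAt ℝ (fun y => u y i) x) (i : Fin 3) :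
    DifferentiableAt ℝ (fun y => (f y • u y) i) x :=
  hf.mul (hu i)

lemma div3_smul_add_smul_of_add_eq_one (hf : DifferentiableAt ℝ f x)
    (hg : DifferentiableAt ℝ g x) (hu : ∀ i, DifferentiableAt ℝ (fun y => u y i) x)
    (hfg : (fun y => f y + g y) =ᶠ[𝓝 x] fun _ => 1) :
    div3 (fun y => f y • u y) x + div3 (fun y => g y • u y) x = div3 u x := by
  rw [← div3_add (hf.smul_component hu) (hg.smul_component hu)]
  exact div3_congr (hfg.mono fun y hy => by simp only [← add_smul, hy, one_smul])

lemma div3_linear_combination_smul (c d : ℝ) (hf : DifferentiableAt ℝ f x)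
    (hg : DifferentiableAt ℝ g x) (hu : ∀ i, DifferentiableAt ℝ (fun y => u y i) x) :
    div3 (fun y => (c * f y + d * g y) • u y) x
      = c * div3 (fun y => f y • u y) x + d * div3 (fun y => g y • u y) x := by
  have hfu := hf.smul_component hu
  have hgu := hg.smul_component hu
  simp only [add_smul, mul_smul]
  rw [div3_add (u := fun y => c • (f y • u y)) (w := fun y => d • (g y • u y))
      (fun i => (hfu i).const_mul c) (fun i => (hgu i).const_mul d),
    div3_const_smul c hfu, div3_const_smul d hgu]

end Divergence

section Time

variable {a b : ℝ → ℝ} {t : ℝ}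

lemma deriv_linear_combination (c d : ℝ) (ha : DifferentiableAt ℝ a t)
    (hb : DifferentiableAt ℝ b t) :
    deriv (fun s => c * a s + d * b s) t = c * deriv a t + d * deriv b t := by
  rw [deriv_fun_add (ha.const_mul c) (hb.const_mul d), deriv_const_mul c ha,
    deriv_const_mul d hb]

lemma deriv_add_deriv_of_add_eq_one (ha : DifferentiableAt ℝ a t)
    (hb : DifferentiableAt ℝ b t) (hab : (fun s => a s + b s) =ᶠ[𝓝 t] fun _ => 1) :
    deriv a t + deriv b t = 0 := by
  rw [← deriv_fun_add ha hb, hab.deriv_eq, deriv_const]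

end Time

/-- The balance laws at a single point, with `a, b` the time derivatives of `Φ₁, Φ₂`,
`A, B` the divergences of `Φ₁ v, Φ₂ v`, `D = ∇·v`, `j = ∇·J` and `j' = ∇·J̃`. -/
lemma balance_laws_solve {ρ₁ ρ₂ a b A B D j j' : ℝ} (hρ₁ : ρ₁ ≠ 0) (hρ₂ : ρ₂ ≠ 0)
    (hvol₁ : a + A = -(1 / ρ₁) * j) (hvol₂ : b + B = -(1 / ρ₂) * j')
    (hmass : ρ₁ * a + ρ₂ * b + (ρ₁ * A + ρ₂ * B) = 0)
    (htime : a + b = 0) (hspace : A + B = D) :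
    j + j' = 0 ∧ D = (ρ₁ - ρ₂) / (ρ₁ * ρ₂) * j := by
  have hj : j = -ρ₁ * (a + A) := by rw [hvol₁]; field_simp
  have hj' : j' = -ρ₂ * (b + B) := by rw [hvol₂]; field_simp
  have hsum : j + j' = 0 := by rw [hj, hj']; linear_combination -hmass
  refine ⟨hsum, ?_⟩
  have hD : D = -(1 / ρ₁) * j - (1 / ρ₂) * j' := by
    linear_combination -hspace - htime + hvol₁ + hvol₂
  rw [hD, eq_neg_of_add_eq_zero_right hsum]
  field_simp
  ring

/-- **Quasi-incompressibility from the component volume balances.**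
If `∂Φ₁/∂t + ∇·(Φ₁ v) = −(1/ρ₁)∇·J`, `∂Φ₂/∂t + ∇·(Φ₂ v) = −(1/ρ₂)∇·J̃`,
`Φ₁ + Φ₂ = 1` and `ρ = ρ₁Φ₁ + ρ₂Φ₂` satisfies `∂ρ/∂t + ∇·(ρ v) = 0`, then
`∇·(J + J̃) = 0` and `∇·v = ((ρ₁ − ρ₂)/(ρ₁ρ₂)) ∇·J` pointwise. -/
theorem quasi_incompressibility
    (ρ₁ ρ₂ : ℝ) (hρ₁ : ρ₁ ≠ 0) (hρ₂ : ρ₂ ≠ 0)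
    (U : Set (ℝ × (Fin 3 → ℝ))) (hU : IsOpen U)
    (Φ₁ Φ₂ : ℝ → (Fin 3 → ℝ) → ℝ)
    (v J Jt : ℝ → (Fin 3 → ℝ) → Fin 3 → ℝ)
    (hΦ₁ : ContDiffOn ℝ 1 (Function.uncurry Φ₁) U)
    (hΦ₂ : ContDiffOn ℝ 1 (Function.uncurry Φ₂) U)
    (hv : ∀ j, ContDiffOn ℝ 1 (fun q : ℝ × (Fin 3 → ℝ) => v q.1 q.2 j) U)
    (hJ : ∀ j, ContDiffOn ℝ 1 (fun q : ℝ × (Fin 3 → ℝ) => J q.1 q.2 j) U)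
    (hJt : ∀ j, ContDiffOn ℝ 1 (fun q : ℝ × (Fin 3 → ℝ) => Jt q.1 q.2 j) U)
    (hvol₁ : ∀ q ∈ U,
      deriv (fun s => Φ₁ s q.2) q.1 + div3 (fun y => Φ₁ q.1 y • v q.1 y) q.2
        = -(1 / ρ₁) * div3 (J q.1) q.2)
    (hvol₂ : ∀ q ∈ U,
      deriv (fun s => Φ₂ s q.2) q.1 + div3 (fun y => Φ₂ q.1 y • v q.1 y) q.2
        = -(1 / ρ₂) * div3 (Jt q.1) q.2)
    (hnovoid : ∀ q ∈ U, Φ₁ q.1 q.2 + Φ₂ q.1 q.2 = 1)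
    (hmass : ∀ q ∈ U,
      deriv (fun s => ρ₁ * Φ₁ s q.2 + ρ₂ * Φ₂ s q.2) q.1
        + div3 (fun y => (ρ₁ * Φ₁ q.1 y + ρ₂ * Φ₂ q.1 y) • v q.1 y) q.2 = 0) :
    ∀ q ∈ U,
      div3 (fun y => J q.1 y + Jt q.1 y) q.2 = 0 ∧
      div3 (v q.1) q.2 = ((ρ₁ - ρ₂) / (ρ₁ * ρ₂)) * div3 (J q.1) q.2 := by
  intro q hq
  have hUq : U ∈ 𝓝 q := hU.mem_nhds hq
  have diff {φ : ℝ × (Fin 3 → ℝ) → ℝ} (h : ContDiffOn ℝ 1 φ U) : DifferentiableAt ℝ φ q :=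
    (h.contDiffAt hUq).differentiableAt one_ne_zero
  have dΦ₁t : DifferentiableAt ℝ (fun s => Φ₁ s q.2) q.1 := (diff hΦ₁).comp_prodMk_left
  have dΦ₂t : DifferentiableAt ℝ (fun s => Φ₂ s q.2) q.1 := (diff hΦ₂).comp_prodMk_left
  have dΦ₁x : DifferentiableAt ℝ (Φ₁ q.1) q.2 := (diff hΦ₁).comp_prodMk_right
  have dΦ₂x : DifferentiableAt ℝ (Φ₂ q.1) q.2 := (diff hΦ₂).comp_prodMk_right
  have dv (i) : DifferentiableAt ℝ (fun y => v q.1 y i) q.2 := (diff (hv i)).comp_prodMk_right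
  have hmass_q := hmass q hq
  rw [deriv_linear_combination ρ₁ ρ₂ dΦ₁t dΦ₂t,
    div3_linear_combination_smul ρ₁ ρ₂ dΦ₁x dΦ₂x dv] at hmass_q
  obtain ⟨hsum, hdiv⟩ := balance_laws_solve hρ₁ hρ₂ (hvol₁ q hq) (hvol₂ q hq) hmass_q
    (deriv_add_deriv_of_add_eq_one dΦ₁t dΦ₂t
      ((eventually_prodMk_left_mem hUq).mono fun s hs => hnovoid _ hs))
    (div3_smul_add_smul_of_add_eq_one dΦ₁x dΦ₂x dv
      ((eventually_prodMk_right_mem hUq).mono fun y hy => hnovoid _ hy))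
  refine ⟨?_, hdiv⟩
  rwa [div3_add (fun i => (diff (hJ i)).comp_prodMk_right)
    (fun i => (diff (hJt i)).comp_prodMk_right)]
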